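/- arXiv:1206.4040 — 2 statements merged into one kernel-verified Lean document; each statement's English description precedes it below -/
import Mathlib

section
/- Let n ≥ 2, χ = 8(n−1)n², E = χ^{−1/2} diag((n−1)i, −i, …, −i) ∈ M_n(ℂ), and e = [[E, 0],[0, E]]. Then e ∈ m, the Cartan–Killing norm of e is ⟨e, e⟩ = 4n tr(e²) = −1, and an element X ∈ m commutes with e (X e = e X) if and only if X = [[A, B],[B̄, −Ā]] where A = diag(−tr 𝐀, 𝐀) and B = diag(0, 𝐁) are block-diagonal with blocks of sizes 1 and n−1, for some 𝐀 ∈ M_{n−1}(ℂ) with 𝐀* = −𝐀 and 𝐁 ∈ M_{n−1}(ℂ) with 𝐁ᵀ = −𝐁. -/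
open Matrix Complex

noncomputable section

/-- the index set {1,…,n} split as 1 + (n−1) -/
abbrev Kn (n : ℕ) := Fin 1 ⊕ Fin (n - 1)
abbrev Idx (n : ℕ) := Kn n ⊕ Kn n

/-- entrywise complex conjugation of a matrix -/
def mconj {k l : Type*} (M : Matrix k l ℂ) : Matrix k l ℂ := M.map (starRingEnd ℂ)

/-- the standard symplectic structure matrix J = [[0, Iₙ],[−Iₙ, 0]] -/
def Jmat (n : ℕ) : Matrix (Idx n) (Idx n) ℂ := fromBlocks 0 1 (-1) 0

/-- membership in m = {X ∈ su(2n) : σ(X) = −X} -/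
def inM (n : ℕ) (X : Matrix (Idx n) (Idx n) ℂ) : Prop :=
  Xᴴ = -X ∧ X.trace = 0 ∧ Jmat n * mconj X * (Jmat n)⁻¹ = -X

/-- E = χ^{−1/2} diag((n−1)i, −i, …, −i) with χ = 8(n−1)n² -/
def Emat (n : ℕ) : Matrix (Kn n) (Kn n) ℂ :=
  ((Real.sqrt (8 * ((n : ℝ) - 1) * (n : ℝ) ^ 2) : ℂ))⁻¹ •
    diagonal (Sum.elim (fun _ => ((n : ℂ) - 1) * I) (fun _ => -I))

/-- e = [[E, 0],[0, E]] -/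
def emat (n : ℕ) : Matrix (Idx n) (Idx n) ℂ := fromBlocks (Emat n) 0 0 (Emat n)

def dK (n : ℕ) : Kn n → ℂ := Sum.elim (fun _ => ((n : ℂ) - 1) * I) (fun _ => -I)
def dvec (n : ℕ) : Idx n → ℂ := Sum.elim (dK n) (dK n)
def cc (n : ℕ) : ℂ := ((Real.sqrt (8 * ((n : ℝ) - 1) * (n : ℝ) ^ 2) : ℝ) : ℂ)

lemma emat_eq (n : ℕ) : emat n = (cc n)⁻¹ • diagonal (dvec n) := by
  ext i j
  obtain (a|a)|(a|a) := i <;> obtain (b|b)|(b|b) := j <;>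
    simp [emat, Emat, cc, dK, dvec, diagonal_apply]

lemma JJ (n : ℕ) : Jmat n * Jmat n = -1 := by
  have h : (-1 : Matrix (Idx n) (Idx n) ℂ) = fromBlocks (-1) 0 0 (-1) := by
    rw [← fromBlocks_one, fromBlocks_neg, neg_zero]
  rw [Jmat, fromBlocks_multiply, h]
  simp

lemma Jinv (n : ℕ) : (Jmat n)⁻¹ = -Jmat n :=
  Matrix.inv_eq_right_inv (by rw [mul_neg, JJ]; simp)

lemma chi_pos {n : ℕ} (hn : 2 ≤ n) : (0:ℝ) < 8 * ((n : ℝ) - 1) * (n : ℝ) ^ 2 := by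
  have h1 : (2:ℝ) ≤ (n:ℝ) := by exact_mod_cast hn
  nlinarith

lemma cc_ne {n : ℕ} (hn : 2 ≤ n) : cc n ≠ 0 := by
  simp only [cc, ne_eq, Complex.ofReal_eq_zero]
  exact ne_of_gt (Real.sqrt_pos.mpr (chi_pos hn))

lemma cc_sq {n : ℕ} (hn : 2 ≤ n) : cc n * cc n = 8 * ((n:ℂ) - 1) * (n:ℂ) ^ 2 := by
  rw [cc, ← Complex.ofReal_mul, Real.mul_self_sqrt (le_of_lt (chi_pos hn))]
  push_cast
  ring

lemma hne {n : ℕ} (hn : 2 ≤ n) : ((n:ℂ) - 1) * I ≠ -I := by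
  intro h
  have h2 : (n:ℂ) = 0 := by
    have := mul_right_cancel₀ Complex.I_ne_zero (h.trans (by ring : -I = (-1) * I))
    linear_combination this
  have : n = 0 := by exact_mod_cast h2
  omega

lemma comm_iff {n : ℕ} (hn : 2 ≤ n) (X : Matrix (Idx n) (Idx n) ℂ) :
    X * emat n = emat n * X ↔ ∀ i j, X i j * dvec n j = dvec n i * X i j := by
  rw [emat_eq, mul_smul_comm, smul_mul_assoc]
  constructor
  · intro h i j
    have h2 : X * diagonal (dvec n) = diagonal (dvec n) * X :=
      smul_right_injective _ (inv_ne_zero (cc_ne hn)) h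
    have := congrFun (congrFun h2 i) j
    simpa [mul_diagonal, diagonal_mul] using this
  · intro h
    congr 1
    ext i j
    simp [mul_diagonal, diagonal_mul, h i j]

lemma star_dvec (n : ℕ) (i : Idx n) : star (dvec n i) = -dvec n i := by
  obtain (a|a)|(a|a) := i <;> simp [dvec, dK] <;> ring

lemma sum_dvec {n : ℕ} (hn : 2 ≤ n) : (∑ i : Idx n, dvec n i) = 0 := by
  have hcast : ((n - 1 : ℕ) : ℂ) = (n : ℂ) - 1 := by
    push_cast [Nat.cast_sub (by omega : 1 ≤ n)]; ring
  simp [dvec, dK, Fintype.sum_sum_type, Finset.sum_const, hcast]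

lemma eH (n : ℕ) : (emat n)ᴴ = -(emat n) := by
  rw [emat_eq, conjTranspose_smul, diagonal_conjTranspose]
  have h1 : star ((cc n)⁻¹) = (cc n)⁻¹ := by simp [cc]
  have h2 : star (dvec n) = fun i => -(dvec n i) := funext fun i => star_dvec n i
  rw [h1, h2, ← diagonal_neg, smul_neg]

lemma etrace {n : ℕ} (hn : 2 ≤ n) : (emat n).trace = 0 := by
  rw [emat_eq, trace_smul, trace_diagonal, sum_dvec hn, smul_zero]

lemma mconj_emat (n : ℕ) : mconj (emat n) = -emat n := by
  ext i j
  simp only [mconj, emat_eq, Matrix.map_apply, Matrix.smul_apply, Matrix.neg_apply,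
    diagonal_apply, smul_eq_mul]
  have h1 : (starRingEnd ℂ) ((cc n)⁻¹) = (cc n)⁻¹ := by simp [cc]
  have h2 : (starRingEnd ℂ) (dvec n i) = -dvec n i := star_dvec n i
  rw [_root_.map_mul, h1, apply_ite (starRingEnd ℂ), map_zero]
  split
  · rw [h2]; ring
  · simp

lemma Je_comm (n : ℕ) : Jmat n * emat n = emat n * Jmat n := by
  rw [emat, Jmat, fromBlocks_multiply, fromBlocks_multiply]
  simp

lemma eSigma {n : ℕ} (hn : 2 ≤ n) : Jmat n * mconj (emat n) * (Jmat n)⁻¹ = -emat n := by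
  rw [Jinv, mconj_emat]
  simp only [mul_neg, neg_mul, neg_neg]
  rw [Je_comm, mul_assoc, JJ]
  simp

lemma part2 {n : ℕ} (hn : 2 ≤ n) : (4 * (n : ℂ)) * (emat n * emat n).trace = -1 := by
  have hcast : ((n - 1 : ℕ) : ℂ) = (n : ℂ) - 1 := by
    push_cast [Nat.cast_sub (by omega : 1 ≤ n)]; ring
  have htr : (emat n * emat n).trace =
      ((cc n)⁻¹ * (cc n)⁻¹) * ∑ i : Idx n, dvec n i * dvec n i := by
    rw [emat_eq, mul_smul_comm, smul_mul_assoc, smul_smul, trace_smul,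
      diagonal_mul_diagonal, trace_diagonal]
    simp [Pi.mul_apply]
  rw [htr]
  have hsum : (∑ i : Idx n, dvec n i * dvec n i) = -2 * ((n:ℂ) - 1) * (n:ℂ) := by
    simp [dvec, dK, Fintype.sum_sum_type, Finset.sum_const, hcast, Complex.I_mul_I]
    ring_nf
    simp [Complex.I_sq]
    ring
  rw [hsum]
  have hc := cc_sq hn
  have hc0 := cc_ne hn
  have hn0 : (n:ℂ) ≠ 0 := by
    simp only [ne_eq, Nat.cast_eq_zero]; omega
  have hn1 : (n:ℂ) - 1 ≠ 0 := by
    intro h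
    have : (n:ℂ) = 1 := by linear_combination h
    have : n = 1 := by exact_mod_cast this
    omega
  rw [← mul_inv, hc]
  field_simp
  ring

lemma sigma_eq {n : ℕ} {X : Matrix (Idx n) (Idx n) ℂ}
    (h3 : Jmat n * mconj X * (Jmat n)⁻¹ = -X) : Jmat n * mconj X = -(X * Jmat n) := by
  have h := congrArg (· * Jmat n) h3
  simp only [Jinv] at h
  have h1 : (-Jmat n) * Jmat n = 1 := by rw [neg_mul, JJ, neg_neg]
  rw [mul_assoc, h1, mul_one, neg_mul] at h
  exact h

lemma sig1 {n : ℕ} {X : Matrix (Idx n) (Idx n) ℂ}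
    (h3 : Jmat n * mconj X * (Jmat n)⁻¹ = -X) (a b : Kn n) :
    (starRingEnd ℂ) (X (Sum.inr a) (Sum.inr b)) = -X (Sum.inl a) (Sum.inl b) := by
  have h := congrFun (congrFun (sigma_eq h3) (Sum.inl a)) (Sum.inr b)
  simpa [mul_apply, Fintype.sum_sum_type, Jmat, mconj, one_apply, neg_apply,
    fromBlocks_apply₁₁, fromBlocks_apply₁₂, fromBlocks_apply₂₁, fromBlocks_apply₂₂,
    ite_mul, mul_ite, Finset.sum_ite_eq, Finset.sum_ite_eq'] using h

lemma sig2 {n : ℕ} {X : Matrix (Idx n) (Idx n) ℂ}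
    (h3 : Jmat n * mconj X * (Jmat n)⁻¹ = -X) (a b : Kn n) :
    (starRingEnd ℂ) (X (Sum.inr a) (Sum.inl b)) = X (Sum.inl a) (Sum.inr b) := by
  have h := congrFun (congrFun (sigma_eq h3) (Sum.inl a)) (Sum.inl b)
  simpa [mul_apply, Fintype.sum_sum_type, Jmat, mconj, one_apply, neg_apply,
    fromBlocks_apply₁₁, fromBlocks_apply₁₂, fromBlocks_apply₂₁, fromBlocks_apply₂₂,
    ite_mul, mul_ite, Finset.sum_ite_eq, Finset.sum_ite_eq'] using h

/-- e is a unit-norm element of m (for the Cartan–Killing form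
⟨X,Y⟩ = 4n tr(XY)), and the centralizer of e in m consists exactly of the block
matrices built from A = diag(−tr Ab, Ab), B = diag(0, Bb) with Ab anti-Hermitian
and Bb complex antisymmetric of size n−1. -/
theorem stmt5 (n : ℕ) (hn : 2 ≤ n) :
    inM n (emat n) ∧
    (4 * (n : ℂ)) * (emat n * emat n).trace = -1 ∧
    (∀ X : Matrix (Idx n) (Idx n) ℂ, inM n X →
      (X * emat n = emat n * X ↔
        ∃ Ab Bb : Matrix (Fin (n - 1)) (Fin (n - 1)) ℂ,
          Abᴴ = -Ab ∧ Bbᵀ = -Bb ∧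
          X = fromBlocks
                (fromBlocks (of fun _ _ => -Ab.trace) 0 0 Ab)
                (fromBlocks 0 0 0 Bb)
                (mconj (fromBlocks 0 0 0 Bb))
                (-(mconj (fromBlocks (of fun _ _ => -Ab.trace) 0 0 Ab))))) := by

  refine ⟨⟨eH n, etrace hn, eSigma hn⟩, part2 hn, ?_⟩
  intro X hX
  obtain ⟨h1, h2, h3⟩ := hX
  have hH : ∀ i j, (starRingEnd ℂ) (X j i) = -X i j := fun i j => by
    have := congrFun (congrFun h1 i) j
    simpa [conjTranspose_apply, neg_apply] using this
  have hs1 : ∀ a b : Kn n, X (Sum.inr a) (Sum.inr b)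
      = -(starRingEnd ℂ) (X (Sum.inl a) (Sum.inl b)) := fun a b => by
    have := congrArg (starRingEnd ℂ) (sig1 h3 a b)
    simpa using this
  have hs2 : ∀ a b : Kn n, X (Sum.inr a) (Sum.inl b)
      = (starRingEnd ℂ) (X (Sum.inl a) (Sum.inr b)) := fun a b => by
    have := congrArg (starRingEnd ℂ) (sig2 h3 a b)
    simpa using this
  constructor
  · intro hcomm
    have hz : ∀ i j : Idx n, dvec n i ≠ dvec n j → X i j = 0 := by
      intro i j hne2
      have h := (comm_iff hn X).mp hcomm i j
      have h0 : X i j * (dvec n j - dvec n i) = 0 := by linear_combination h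
      rcases mul_eq_zero.mp h0 with h' | h'
      · exact h'
      · exact absurd (sub_eq_zero.mp h').symm hne2
    set Ab : Matrix (Fin (n-1)) (Fin (n-1)) ℂ :=
      of fun a b => X (Sum.inl (Sum.inr a)) (Sum.inl (Sum.inr b)) with hAb
    set Bb : Matrix (Fin (n-1)) (Fin (n-1)) ℂ :=
      of fun a b => X (Sum.inl (Sum.inr a)) (Sum.inr (Sum.inr b)) with hBb
    have hAtr : Ab.trace = ∑ a : Fin (n-1), X (Sum.inl (Sum.inr a)) (Sum.inl (Sum.inr a)) := by
      simp [Matrix.trace, Matrix.diag, hAb]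
    have hdiag : ∀ a : Kn n, X (Sum.inr a) (Sum.inr a) = X (Sum.inl a) (Sum.inl a) := fun a => by
      have e1 := hs1 a a
      rw [hH (Sum.inl a) (Sum.inl a)] at e1
      simpa using e1
    have hsum : X (Sum.inl (Sum.inl 0)) (Sum.inl (Sum.inl 0)) + Ab.trace = 0 := by
      have ht : (∑ i : Idx n, X i i) = 0 := by simpa [Matrix.trace, Matrix.diag] using h2
      simp only [Fintype.sum_sum_type, Fin.sum_univ_one] at ht
      simp only [hdiag] at ht
      rw [hAtr]
      linear_combination ht / 2
    have htr0 : ∀ a b : Fin 1, X (Sum.inl (Sum.inl a)) (Sum.inl (Sum.inl b)) = -Ab.trace := by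
      intro a b
      have ha : a = 0 := Subsingleton.elim _ _
      have hb : b = 0 := Subsingleton.elim _ _
      subst ha; subst hb
      linear_combination hsum
    have hq0 : ∀ a b : Fin 1, X (Sum.inl (Sum.inl a)) (Sum.inr (Sum.inl b)) = 0 := by
      intro a b
      have ha : a = 0 := Subsingleton.elim _ _
      have hb : b = 0 := Subsingleton.elim _ _
      subst ha; subst hb
      have e1 := hs2 (Sum.inl (0 : Fin 1)) (Sum.inl (0 : Fin 1))
      have e2 := hH (Sum.inl (Sum.inl (0 : Fin 1))) (Sum.inr (Sum.inl (0 : Fin 1)))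
      have e3 : X (Sum.inl (Sum.inl (0:Fin 1))) (Sum.inr (Sum.inl (0:Fin 1)))
          = -X (Sum.inl (Sum.inl (0:Fin 1))) (Sum.inr (Sum.inl (0:Fin 1))) := by
        calc X (Sum.inl (Sum.inl (0:Fin 1))) (Sum.inr (Sum.inl (0:Fin 1)))
            = (starRingEnd ℂ) ((starRingEnd ℂ)
                (X (Sum.inl (Sum.inl (0:Fin 1))) (Sum.inr (Sum.inl (0:Fin 1))))) := by
              rw [Complex.conj_conj]
          _ = (starRingEnd ℂ) (X (Sum.inr (Sum.inl (0:Fin 1))) (Sum.inl (Sum.inl (0:Fin 1)))) := by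
              rw [e1]
          _ = -X (Sum.inl (Sum.inl (0:Fin 1))) (Sum.inr (Sum.inl (0:Fin 1))) := e2
      linear_combination e3 / 2
    refine ⟨Ab, Bb, ?_, ?_, ?_⟩
    · ext a b
      simp only [conjTranspose_apply, neg_apply, hAb, of_apply]
      exact hH _ _
    · ext a b
      simp only [transpose_apply, Matrix.neg_apply, hBb, of_apply]
      have e1 := hs2 (Sum.inr b) (Sum.inr a)
      have e2 := hH (Sum.inl (Sum.inr a)) (Sum.inr (Sum.inr b))
      have e3 : (starRingEnd ℂ) (X (Sum.inr (Sum.inr b)) (Sum.inl (Sum.inr a)))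
          = X (Sum.inl (Sum.inr b)) (Sum.inr (Sum.inr a)) := by
        rw [e1]; exact Complex.conj_conj _
      rw [← e3, e2]
    · ext i j
      obtain (a|a)|(a|a) := i <;> obtain (b|b)|(b|b) := j <;>
        simp only [fromBlocks_apply₁₁, fromBlocks_apply₁₂, fromBlocks_apply₂₁,
          fromBlocks_apply₂₂, of_apply, Matrix.zero_apply, Matrix.neg_apply, mconj,
          Matrix.map_apply, map_zero, map_neg, neg_zero, neg_neg]
      · exact htr0 a b
      · exact hz _ _ (hne hn)
      · exact hq0 a b
      · exact hz _ _ (hne hn)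
      · exact hz _ _ (Ne.symm (hne hn))
      · rfl
      · exact hz _ _ (Ne.symm (hne hn))
      · rfl
      · rw [hs2 (Sum.inl a) (Sum.inl b), hq0 a b, map_zero]
      · exact hz _ _ (hne hn)
      · rw [hs1 (Sum.inl a) (Sum.inl b), htr0 a b]
        simp
      · exact hz _ _ (hne hn)
      · exact hz _ _ (Ne.symm (hne hn))
      · exact hs2 (Sum.inr a) (Sum.inr b)
      · exact hz _ _ (Ne.symm (hne hn))
      · rw [hs1 (Sum.inr a) (Sum.inr b)]
        rfl
  · rintro ⟨Ab, Bb, hA, hB, rfl⟩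
    rw [comm_iff hn]
    intro i j
    obtain (a|a)|(a|a) := i <;> obtain (b|b)|(b|b) := j <;>
      simp [dvec, dK, mconj, fromBlocks_apply₁₁, fromBlocks_apply₁₂, fromBlocks_apply₂₁,
        fromBlocks_apply₂₂, mul_comm]
end
end

section
/- Let n ≥ 2, χ = 8(n−1)n², E = χ^{−1/2} diag((n−1)i, −i, …, −i) ∈ M_n(ℂ), and e = [[E, 0],[0, E]] ∈ m. Define m_∥ = {X ∈ m : X e = e X}, h_∥ = {Y ∈ h : Y e = e Y}, and let m_⊥ = {X ∈ m : tr(XY) = 0 for all Y ∈ m_∥} and h_⊥ = {X ∈ h : tr(XY) = 0 for all Y ∈ h_∥} be the orthogonal complements with respect to the trace form. Then, as real vector spaces, dim m_∥ = (n−1)(2n−3), dim m_⊥ = 4(n−1), dim h_∥ = (n−1)(2n−1) + 3, and dim h_⊥ = 4(n−1). -/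
open Matrix Complex

noncomputable section

/-- membership in h = {X ∈ su(2n) : σ(X) = X} -/
def inH (n : ℕ) (X : Matrix (Idx n) (Idx n) ℂ) : Prop :=
  Xᴴ = -X ∧ X.trace = 0 ∧ Jmat n * mconj X * (Jmat n)⁻¹ = X

/-- m_∥ : centralizer of e in m -/
def mPar (n : ℕ) : Set (Matrix (Idx n) (Idx n) ℂ) :=
  {X | inM n X ∧ X * emat n = emat n * X}

/-- m_⊥ : orthogonal complement of m_∥ in m w.r.t. the trace form -/
def mPerp (n : ℕ) : Set (Matrix (Idx n) (Idx n) ℂ) :=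
  {X | inM n X ∧ ∀ Y ∈ mPar n, (X * Y).trace = 0}

/-- h_∥ : centralizer of e in h -/
def hPar (n : ℕ) : Set (Matrix (Idx n) (Idx n) ℂ) :=
  {X | inH n X ∧ X * emat n = emat n * X}

/-- h_⊥ : orthogonal complement of h_∥ in h w.r.t. the trace form -/
def hPerp (n : ℕ) : Set (Matrix (Idx n) (Idx n) ℂ) :=
  {X | inH n X ∧ ∀ Y ∈ hPar n, (X * Y).trace = 0}

open Module

-- ## basic mconj lemmas
section mconjLemmas
variable {k l m : Type*}

@[simp] lemma mconj_mconj (M : Matrix k l ℂ) : mconj (mconj M) = M := by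
  ext i j; simp [mconj]

@[simp] lemma mconj_zero : mconj (0 : Matrix k l ℂ) = 0 := by ext i j; simp [mconj]

@[simp] lemma mconj_add (M N : Matrix k l ℂ) : mconj (M + N) = mconj M + mconj N := by
  ext i j; simp [mconj]

@[simp] lemma mconj_neg (M : Matrix k l ℂ) : mconj (-M) = -(mconj M) := by
  ext i j; simp [mconj]

@[simp] lemma mconj_smul (r : ℝ) (M : Matrix k l ℂ) : mconj (r • M) = r • mconj M := by
  ext i j; simp [mconj, Complex.conj_ofReal]

lemma mconj_mul [Fintype l] (M : Matrix k l ℂ) (N : Matrix l m ℂ) :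
    mconj (M * N) = mconj M * mconj N := by
  simp [mconj, Matrix.map_mul]

lemma mconj_fromBlocks {a b c d : Type*} (A : Matrix a c ℂ) (B : Matrix a d ℂ)
    (C : Matrix b c ℂ) (D : Matrix b d ℂ) :
    mconj (fromBlocks A B C D) = fromBlocks (mconj A) (mconj B) (mconj C) (mconj D) :=
  fromBlocks_map A B C D _

lemma trace_mconj [Fintype k] (M : Matrix k k ℂ) :
    (mconj M).trace = star M.trace := by
  simp [mconj, Matrix.trace, Matrix.diag, map_sum, Complex.star_def]

lemma conjTranspose_mconj (M : Matrix k l ℂ) : (mconj M)ᴴ = Mᵀ := by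
  ext i j; simp [mconj, conjTranspose_apply]

lemma mconj_eq_zero_iff {M : Matrix k l ℂ} : mconj M = 0 ↔ M = 0 := by
  constructor
  · intro h; have := congrArg mconj h; simpa using this
  · rintro rfl; simp

end mconjLemmas

lemma trace_fromBlocks' {a b : Type*} [Fintype a] [Fintype b]
    (A : Matrix a a ℂ) (B : Matrix a b ℂ) (C : Matrix b a ℂ) (D : Matrix b b ℂ) :
    (fromBlocks A B C D).trace = A.trace + D.trace := by
  simp [Matrix.trace, Matrix.diag, Fintype.sum_sum_type, fromBlocks]

-- ## J matrix
def Jinv_s6 (n : ℕ) : Matrix (Idx n) (Idx n) ℂ := fromBlocks 0 (-1) 1 0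

lemma Jmat_inv (n : ℕ) : (Jmat n)⁻¹ = Jinv_s6 n := by
  apply inv_eq_right_inv
  simp [Jmat, Jinv_s6, fromBlocks_multiply, ← fromBlocks_one]

lemma sigma_fromBlocks (n : ℕ) (A B C D : Matrix (Kn n) (Kn n) ℂ) :
    Jmat n * mconj (fromBlocks A B C D) * (Jmat n)⁻¹ =
      fromBlocks (mconj D) (-(mconj C)) (-(mconj B)) (mconj A) := by
  rw [Jmat_inv, mconj_fromBlocks]
  simp [Jmat, Jinv_s6, fromBlocks_multiply]

-- ## entry lemmas
lemma mconj_eq_neg_transpose {k : Type*} {A : Matrix k k ℂ} (hA : Aᴴ = -A) :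
    mconj A = -Aᵀ := by
  ext i j
  have := congrFun (congrFun hA j) i
  simp only [conjTranspose_apply, neg_apply, Complex.star_def] at this
  simpa [mconj] using this

lemma conjTranspose_eq_neg_mconj {k : Type*} {B : Matrix k k ℂ} (hB : Bᵀ = -B) :
    Bᴴ = -(mconj B) := by
  ext i j
  have := congrFun (congrFun hB i) j
  simp only [transpose_apply, neg_apply] at this
  simp [conjTranspose_apply, mconj, Complex.star_def, this]

lemma conjTranspose_eq_mconj {k : Type*} {B : Matrix k k ℂ} (hB : Bᵀ = B) :
    Bᴴ = mconj B := by
  ext i j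
  have := congrFun (congrFun hB i) j
  simp only [transpose_apply] at this
  simp [conjTranspose_apply, mconj, Complex.star_def, this]

-- ## characterization of inM
lemma inM_iff {n : ℕ} {X : Matrix (Idx n) (Idx n) ℂ} :
    inM n X ↔ ∃ A B : Matrix (Kn n) (Kn n) ℂ,
      Aᴴ = -A ∧ A.trace = 0 ∧ Bᵀ = -B ∧ X = fromBlocks A B (mconj B) (-(mconj A)) := by
  constructor
  · rintro ⟨h1, h2, h3⟩
    set A := X.toBlocks₁₁ with hA
    set B := X.toBlocks₁₂ with hB
    set C := X.toBlocks₂₁ with hC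
    set D := X.toBlocks₂₂ with hD
    have hX : X = fromBlocks A B C D := (fromBlocks_toBlocks X).symm
    rw [hX, sigma_fromBlocks, fromBlocks_neg] at h3
    rw [hX, fromBlocks_conjTranspose, fromBlocks_neg] at h1
    rw [hX, trace_fromBlocks'] at h2
    obtain ⟨e1, e2, e3, e4⟩ := fromBlocks_inj.mp h3
    obtain ⟨f1, f2, f3, f4⟩ := fromBlocks_inj.mp h1
    have hCB : C = mconj B := by
      have := congrArg Neg.neg e3; simpa using this.symm
    have hDA : D = -(mconj A) := by
      have := congrArg mconj e1; simpa using this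
    have hBt : Bᵀ = -B := by
      rw [hCB] at f2; rw [← conjTranspose_mconj B, f2]
    have htr : A.trace = 0 := by
      rw [hDA, trace_neg, trace_mconj, ← trace_conjTranspose, f1, trace_neg, neg_neg] at h2
      have : (2:ℂ) * A.trace = 0 := by linear_combination h2
      simpa using this
    exact ⟨A, B, f1, htr, hBt, by rw [hX, hCB, hDA]⟩
  · rintro ⟨A, B, hA, htr, hB, rfl⟩
    refine ⟨?_, ?_, ?_⟩
    · rw [fromBlocks_conjTranspose, fromBlocks_neg]
      rw [fromBlocks_inj]
      refine ⟨hA, by rw [conjTranspose_mconj, hB], conjTranspose_eq_neg_mconj hB, ?_⟩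
      rw [conjTranspose_neg, conjTranspose_mconj, mconj_eq_neg_transpose hA, neg_neg]
    · rw [trace_fromBlocks', htr, trace_neg, trace_mconj, htr]; simp
    · rw [sigma_fromBlocks, fromBlocks_neg, fromBlocks_inj]
      refine ⟨by simp, by simp, by simp, by simp⟩

-- ## characterization of inH
lemma inH_iff {n : ℕ} {X : Matrix (Idx n) (Idx n) ℂ} :
    inH n X ↔ ∃ A B : Matrix (Kn n) (Kn n) ℂ,
      Aᴴ = -A ∧ Bᵀ = B ∧ X = fromBlocks A B (-(mconj B)) (mconj A) := by
  constructor
  · rintro ⟨h1, h2, h3⟩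
    set A := X.toBlocks₁₁ with hA
    set B := X.toBlocks₁₂ with hB
    set C := X.toBlocks₂₁ with hC
    set D := X.toBlocks₂₂ with hD
    have hX : X = fromBlocks A B C D := (fromBlocks_toBlocks X).symm
    rw [hX, sigma_fromBlocks] at h3
    rw [hX, fromBlocks_conjTranspose, fromBlocks_neg] at h1
    obtain ⟨e1, e2, e3, e4⟩ := fromBlocks_inj.mp h3
    obtain ⟨f1, f2, f3, f4⟩ := fromBlocks_inj.mp h1
    have hCB : C = -(mconj B) := by
      have h0 : mconj B = -C := by simpa using (congrArg mconj e2).symm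
      rw [h0, neg_neg]
    have hDA : D = mconj A := by
      have := congrArg mconj e1; simpa using this
    have hBt : Bᵀ = B := by
      rw [hCB] at f2
      have : (mconj B)ᴴ = B := by
        have := congrArg Neg.neg f2; simpa using this
      rwa [conjTranspose_mconj] at this
    exact ⟨A, B, f1, hBt, by rw [hX, hCB, hDA]⟩
  · rintro ⟨A, B, hA, hB, rfl⟩
    refine ⟨?_, ?_, ?_⟩
    · rw [fromBlocks_conjTranspose, fromBlocks_neg, fromBlocks_inj]
      refine ⟨hA, ?_, ?_, ?_⟩
      · rw [conjTranspose_neg, conjTranspose_mconj, hB]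
      · rw [conjTranspose_eq_mconj hB, neg_neg]
      · rw [conjTranspose_mconj, mconj_eq_neg_transpose hA, neg_neg]
    · have hst : star A.trace = -A.trace := by
        rw [← trace_conjTranspose, hA, trace_neg]
      rw [trace_fromBlocks', trace_mconj, hst]
      ring
    · rw [sigma_fromBlocks, fromBlocks_inj]
      refine ⟨by simp, by simp, by simp, by simp⟩

-- ## commuting with Emat
lemma sqrtchi_ne_zero {n : ℕ} (hn : 2 ≤ n) :
    ((Real.sqrt (8 * ((n : ℝ) - 1) * (n : ℝ) ^ 2) : ℂ)) ≠ 0 := by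
  have h1 : (2:ℝ) ≤ (n:ℝ) := by exact_mod_cast hn
  have hpos : 0 < 8 * ((n : ℝ) - 1) * (n : ℝ) ^ 2 := by nlinarith
  have := Real.sqrt_pos.mpr hpos
  exact_mod_cast ne_of_gt this

lemma commE_iff {n : ℕ} (hn : 2 ≤ n) (M : Matrix (Kn n) (Kn n) ℂ) :
    M * Emat n = Emat n * M ↔ M = fromBlocks (M.toBlocks₁₁) 0 0 (M.toBlocks₂₂) := by
  set d : Kn n → ℂ := Sum.elim (fun _ => ((n : ℂ) - 1) * I) (fun _ => -I) with hd
  have hc := sqrtchi_ne_zero hn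
  have hstep : (M * Emat n = Emat n * M) ↔ M * diagonal d = diagonal d * M := by
    rw [Emat, Matrix.mul_smul, Matrix.smul_mul]
    constructor
    · intro h
      exact smul_right_injective _ (inv_ne_zero hc) h
    · intro h; rw [h]
  rw [hstep]
  have hnC : ((n : ℂ) * I) ≠ 0 := by
    apply mul_ne_zero
    · exact_mod_cast (by omega : n ≠ 0)
    · exact I_ne_zero
  constructor
  · intro h
    have key : ∀ i j, M i j * d j = d i * M i j := by
      intro i j
      have := congrFun (congrFun h i) j
      simpa [mul_diagonal, diagonal_mul] using this
    ext i j
    rcases i with i | i <;> rcases j with j | j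
    · simp [fromBlocks, toBlocks₁₁]
    · have hk := key (Sum.inl i) (Sum.inr j)
      simp only [hd, Sum.elim_inl, Sum.elim_inr] at hk
      have h0 : M (Sum.inl i) (Sum.inr j) * ((n:ℂ) * I) = 0 := by linear_combination -hk
      have := (mul_eq_zero.mp h0).resolve_right hnC
      simpa [fromBlocks] using this
    · have hk := key (Sum.inr i) (Sum.inl j)
      simp only [hd, Sum.elim_inl, Sum.elim_inr] at hk
      have h0 : M (Sum.inr i) (Sum.inl j) * ((n:ℂ) * I) = 0 := by linear_combination hk
      have := (mul_eq_zero.mp h0).resolve_right hnC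
      simpa [fromBlocks] using this
    · simp [fromBlocks, toBlocks₂₂]
  · intro hM
    ext i j
    rw [mul_diagonal, diagonal_mul]
    rcases i with i | i <;> rcases j with j | j
    · simp only [hd, Sum.elim_inl]; ring
    · rw [hM]; simp [fromBlocks]
    · rw [hM]; simp [fromBlocks]
    · simp only [hd, Sum.elim_inr]; ring

lemma comm_emat_iff {n : ℕ} (A B C D : Matrix (Kn n) (Kn n) ℂ) :
    fromBlocks A B C D * emat n = emat n * fromBlocks A B C D ↔
      (A * Emat n = Emat n * A) ∧ (B * Emat n = Emat n * B) ∧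
      (C * Emat n = Emat n * C) ∧ (D * Emat n = Emat n * D) := by
  rw [emat, fromBlocks_multiply, fromBlocks_multiply]
  simp only [Matrix.mul_zero, Matrix.zero_mul, add_zero, zero_add]
  exact fromBlocks_inj

-- ## trace helper lemmas
lemma trace_offdiag_mul_diag {a b : Type*} [Fintype a] [Fintype b]
    (P : Matrix a b ℂ) (Q : Matrix b a ℂ) (R : Matrix a a ℂ) (S : Matrix b b ℂ) :
    (fromBlocks 0 P Q 0 * fromBlocks R 0 0 S).trace = 0 := by
  rw [fromBlocks_multiply, trace_fromBlocks']
  simp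

lemma trace_eq_sum_mul {k : Type*} [Fintype k] (M N : Matrix k k ℂ) :
    (M * N).trace = ∑ i, ∑ j, M i j * N j i := by
  simp [Matrix.trace, Matrix.diag, Matrix.mul_apply]

lemma trace_mul_self_skewAdj {k : Type*} [Fintype k] (N : Matrix k k ℂ) (h : Nᴴ = -N) :
    (N * N).trace = -((∑ i, ∑ j, Complex.normSq (N i j) : ℝ) : ℂ) := by
  rw [trace_eq_sum_mul]
  have key : ∀ i j, N i j * N j i = -((Complex.normSq (N i j) : ℝ) : ℂ) := by
    intro i j
    have h1 : star (N j i) = -N i j := by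
      have := congrFun (congrFun h i) j
      simpa [conjTranspose_apply] using this
    have h2 : N j i = -star (N i j) := by
      have := congrArg star h1
      simpa using this
    rw [h2, mul_neg, Complex.star_def, Complex.mul_conj]
  simp_rw [key]
  push_cast
  simp

lemma trace_mul_mconj_skew {k : Type*} [Fintype k] (N : Matrix k k ℂ) (h : Nᵀ = -N) :
    (N * mconj N).trace = -((∑ i, ∑ j, Complex.normSq (N i j) : ℝ) : ℂ) := by
  rw [trace_eq_sum_mul]
  have key : ∀ i j, N i j * (mconj N) j i = -((Complex.normSq (N i j) : ℝ) : ℂ) := by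
    intro i j
    have h1 : N j i = -N i j := by
      have := congrFun (congrFun h i) j
      simpa [transpose_apply] using this
    simp only [mconj, Matrix.map_apply, h1, map_neg, mul_neg, Complex.mul_conj]
  simp_rw [key]
  push_cast
  simp

lemma trace_mul_mconj_symm {k : Type*} [Fintype k] (N : Matrix k k ℂ) (h : Nᵀ = N) :
    (N * mconj N).trace = ((∑ i, ∑ j, Complex.normSq (N i j) : ℝ) : ℂ) := by
  rw [trace_eq_sum_mul]
  have key : ∀ i j, N i j * (mconj N) j i = ((Complex.normSq (N i j) : ℝ) : ℂ) := by
    intro i j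
    have h1 : N j i = N i j := by
      have := congrFun (congrFun h i) j
      simpa [transpose_apply] using this
    simp only [mconj, Matrix.map_apply, h1, Complex.mul_conj]
  simp_rw [key]
  push_cast
  simp

lemma eq_zero_of_sum_normSq {a b : Type*} [Fintype a] [Fintype b] (N : Matrix a b ℂ)
    (h : ∑ i, ∑ j, Complex.normSq (N i j) = 0) : N = 0 := by
  ext i j
  have h1 : ∀ i ∈ Finset.univ, (∑ j, Complex.normSq (N i j)) = 0 :=
    (Finset.sum_eq_zero_iff_of_nonneg
      (fun i _ => Finset.sum_nonneg fun j _ => Complex.normSq_nonneg _)).mp h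
  have h2 : ∀ j ∈ Finset.univ, Complex.normSq (N i j) = 0 :=
    (Finset.sum_eq_zero_iff_of_nonneg (fun j _ => Complex.normSq_nonneg _)).mp
      (h1 i (Finset.mem_univ i))
  simpa using Complex.normSq_eq_zero.mp (h2 j (Finset.mem_univ j))

-- ## 1×1 matrices
lemma matrix1_eq_smul_one (P : Matrix (Fin 1) (Fin 1) ℂ) : P = P 0 0 • 1 := by
  ext i j
  fin_cases i; fin_cases j
  simp

lemma trace_fin1 (P : Matrix (Fin 1) (Fin 1) ℂ) : P.trace = P 0 0 := by
  simp [Matrix.trace, Matrix.diag]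

-- ## piece spaces


/-- skew-symmetric complex matrices as an ℝ-submodule -/
def SkewS (k : ℕ) : Submodule ℝ (Matrix (Fin k) (Fin k) ℂ) where
  carrier := {M | Mᵀ = -M}
  add_mem' := by intro a b ha hb; simp only [Set.mem_setOf_eq] at *;
                 rw [transpose_add, ha, hb, neg_add]
  zero_mem' := by simp
  smul_mem' := by intro c x hx; simp only [Set.mem_setOf_eq] at *;
                  rw [transpose_smul, hx, smul_neg]

lemma mem_SkewS {k : ℕ} {M : Matrix (Fin k) (Fin k) ℂ} : M ∈ SkewS k ↔ Mᵀ = -M := Iff.rfl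

def skewEquiv (k : ℕ) : SkewS k ≃ₗ[ℝ] ({p : Fin k × Fin k // p.1 < p.2} → ℂ) where
  toFun M := fun p => (M : Matrix _ _ ℂ) p.1.1 p.1.2
  map_add' := fun _ _ => rfl
  map_smul' := fun _ _ => rfl
  invFun f := ⟨Matrix.of fun i j =>
      if h : i < j then f ⟨(i,j), h⟩ else if h' : j < i then -f ⟨(j,i), h'⟩ else 0, by
    rw [mem_SkewS]
    ext i j
    rcases lt_trichotomy i j with h | h | h
    · simp [transpose_apply, of_apply, h, not_lt_of_gt h]
    · subst h; simp [transpose_apply, of_apply, lt_irrefl]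
    · simp [transpose_apply, of_apply, h, not_lt_of_gt h]⟩
  left_inv := by
    rintro ⟨M, hM⟩
    rw [mem_SkewS] at hM
    apply Subtype.ext
    ext i j
    rcases lt_trichotomy i j with h | h | h
    · simp [of_apply, h]
    · subst h
      have h2 : M i i = -(M i i) := by
        conv_lhs => rw [← transpose_apply M i i, hM]
        simp
      have h3 : M i i = 0 := by rwa [eq_neg_iff_add_eq_zero, add_self_eq_zero] at h2
      simp [of_apply, lt_irrefl, h3]
    · have h2 : M j i = -(M i j) := by
        have := congrFun (congrFun hM i) j
        simpa using this
      simp [of_apply, h, not_lt_of_gt h, h2, Matrix.neg_apply]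
  right_inv := by
    intro f
    funext p
    simp only [Submodule.coe_mk, of_apply, p.2, dif_pos]

lemma card_lt_pairs (k : ℕ) :
    Fintype.card {p : Fin k × Fin k // p.1 < p.2} * 2 = k * (k - 1) := by
  have e : {p : Fin k × Fin k // p.1 < p.2} ≃ Σ j : Fin k, Fin j.val :=
    { toFun := fun p => ⟨p.1.2, ⟨p.1.1, p.2⟩⟩
      invFun := fun q => ⟨(⟨q.2.1, lt_trans q.2.2 q.1.isLt⟩, q.1), q.2.2⟩
      left_inv := by rintro ⟨⟨a, b⟩, h⟩; rfl
      right_inv := by rintro ⟨j, i⟩; rfl }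
  rw [Fintype.card_congr e, Fintype.card_sigma]
  simp only [Fintype.card_fin]
  rw [Fin.sum_univ_eq_sum_range (fun j => j)]
  exact Finset.sum_range_id_mul_two k

lemma finrank_SkewS (k : ℕ) : finrank ℝ (SkewS k) = k * (k - 1) := by
  rw [(skewEquiv k).finrank_eq, finrank_pi_fintype, ← card_lt_pairs k]
  simp [Complex.finrank_real_complex, Finset.sum_const, mul_comm]

def SymS (k : ℕ) : Submodule ℝ (Matrix (Fin k) (Fin k) ℂ) where
  carrier := {M | Mᵀ = M}
  add_mem' := by intro a b ha hb; show (a + b)ᵀ = a + b; rw [transpose_add, ha, hb]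
  zero_mem' := by simp
  smul_mem' := by intro c x hx; simp_all [transpose_smul]

def USk (k : ℕ) : Submodule ℝ (Matrix (Fin k) (Fin k) ℂ) where
  carrier := {M | Mᴴ = -M}
  add_mem' := by
    intro a b ha hb
    show (a + b)ᴴ = -(a + b)
    rw [conjTranspose_add, ha, hb]; abel
  zero_mem' := by simp
  smul_mem' := by intro c x hx
                  show (c • x)ᴴ = -(c • x)
                  rw [conjTranspose_smul, hx]; simp

lemma star_half : (star (1/2 : ℂ)) = 1/2 := by norm_num

lemma ISmulISmul {α : Type*} [AddCommGroup α] [Module ℂ α] (x : α) :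
    Complex.I • Complex.I • x = -x := by
  rw [smul_smul, Complex.I_mul_I, neg_one_smul]

/-- the sum map SymS × SkewS → Matrix -/
def symSkewMap (k : ℕ) : (SymS k × SkewS k) →ₗ[ℝ] Matrix (Fin k) (Fin k) ℂ :=
  (SymS k).subtype.comp (LinearMap.fst ℝ _ _) + (SkewS k).subtype.comp (LinearMap.snd ℝ _ _)

lemma symSkewMap_bij (k : ℕ) : Function.Bijective (symSkewMap k) := by
  constructor
  · rw [← LinearMap.ker_eq_bot, LinearMap.ker_eq_bot']
    rintro ⟨⟨P, hP⟩, ⟨Q, hQ⟩⟩ h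
    simp only [symSkewMap, LinearMap.add_apply, LinearMap.comp_apply, LinearMap.fst_apply,
      LinearMap.snd_apply, Submodule.coe_subtype] at h
    have hP' : Pᵀ = P := hP
    have hQ' : Qᵀ = -Q := hQ
    have h2 : P + -Q = 0 := by
      rw [← hP', ← hQ', ← transpose_add, h, transpose_zero]
    have h5 : (P + Q) - (P + -Q) = Q + Q := by abel
    have hQ0 : Q = 0 := by
      have h6 : (2:ℝ) • Q = 0 := by
        rw [two_smul, ← h5, h, h2, sub_zero]
      exact (smul_eq_zero.mp h6).resolve_left two_ne_zero
    have hP0 : P = 0 := by rwa [hQ0, add_zero] at h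
    simp [Prod.ext_iff, Subtype.ext_iff, hP0, hQ0]
  · intro M
    refine ⟨⟨⟨(1/2 : ℂ) • (M + Mᵀ), ?_⟩, ⟨(1/2 : ℂ) • (M - Mᵀ), ?_⟩⟩, ?_⟩
    · show _ᵀ = _
      rw [transpose_smul, transpose_add, transpose_transpose]
      module
    · show _ᵀ = _
      rw [transpose_smul, transpose_sub, transpose_transpose]
      module
    · simp only [symSkewMap, LinearMap.add_apply, LinearMap.comp_apply, LinearMap.fst_apply,
        LinearMap.snd_apply, Submodule.coe_subtype]
      module

/-- the map USk × USk → Matrix, (P,Q) ↦ P + I Q -/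
def uMap (k : ℕ) : (USk k × USk k) →ₗ[ℝ] Matrix (Fin k) (Fin k) ℂ :=
  (USk k).subtype.comp (LinearMap.fst ℝ _ _) +
    (Complex.I • ((USk k).subtype.comp (LinearMap.snd ℝ _ _)))

lemma uMap_bij (k : ℕ) : Function.Bijective (uMap k) := by
  constructor
  · rw [← LinearMap.ker_eq_bot, LinearMap.ker_eq_bot']
    rintro ⟨⟨P, hP⟩, ⟨Q, hQ⟩⟩ h
    simp only [uMap, LinearMap.add_apply, LinearMap.comp_apply, LinearMap.fst_apply,
      LinearMap.snd_apply, Submodule.coe_subtype, LinearMap.smul_apply] at h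
    have hP' : Pᴴ = -P := hP
    have hQ' : Qᴴ = -Q := hQ
    have h2 : (P + Complex.I • Q)ᴴ = 0 := by rw [h, conjTranspose_zero]
    rw [conjTranspose_add, conjTranspose_smul, hP', hQ'] at h2
    have h3 : -P + Complex.I • Q = 0 := by simpa using h2
    have h5 : (P + Complex.I • Q) - (-P + Complex.I • Q) = P + P := by abel
    have hP0 : P = 0 := by
      have h6 : (2:ℝ) • P = 0 := by
        rw [two_smul, ← h5, h, h3, sub_zero]
      exact (smul_eq_zero.mp h6).resolve_left two_ne_zero
    have hQ0 : Q = 0 := by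
      rw [hP0, zero_add] at h
      exact (smul_eq_zero.mp h).resolve_left Complex.I_ne_zero
    simp [Prod.ext_iff, Subtype.ext_iff, hP0, hQ0]
  · intro M
    set N := (1/2 : ℂ) • (M + Mᴴ) with hNdef
    have hN : Nᴴ = N := by
      rw [hNdef, conjTranspose_smul, conjTranspose_add, conjTranspose_conjTranspose, star_half]
      module
    refine ⟨⟨⟨(1/2 : ℂ) • (M - Mᴴ), ?_⟩, ⟨-(Complex.I • N), ?_⟩⟩, ?_⟩
    · show _ᴴ = _
      rw [conjTranspose_smul, conjTranspose_sub, conjTranspose_conjTranspose, star_half]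
      module
    · show _ᴴ = _
      rw [conjTranspose_neg, conjTranspose_smul, hN, Complex.star_def, Complex.conj_I,
        neg_smul, neg_neg]
    · simp only [uMap, LinearMap.add_apply, LinearMap.comp_apply, LinearMap.fst_apply,
        LinearMap.snd_apply, Submodule.coe_subtype, LinearMap.smul_apply]
      rw [smul_neg, ISmulISmul, neg_neg, hNdef]
      module

-- ## finranks of piece spaces
lemma finrank_matrixC (a b : ℕ) : finrank ℝ (Matrix (Fin a) (Fin b) ℂ) = a * b * 2 := by
  rw [Module.finrank_matrix]
  simp [Complex.finrank_real_complex]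

lemma finrank_USk (k : ℕ) : finrank ℝ (USk k) = k * k := by
  have h := LinearEquiv.finrank_eq (LinearEquiv.ofBijective (uMap k) (uMap_bij k))
  rw [finrank_matrixC, Module.finrank_prod] at h
  have h2 : finrank ℝ (USk k) * 2 = (k * k) * 2 := by
    rw [mul_two]; exact h
  exact Nat.eq_of_mul_eq_mul_right two_pos h2

lemma finrank_SymS (k : ℕ) : finrank ℝ (SymS k) = k * k + k := by
  have h := LinearEquiv.finrank_eq (LinearEquiv.ofBijective (symSkewMap k) (symSkewMap_bij k))
  rw [finrank_matrixC, Module.finrank_prod, finrank_SkewS] at h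
  have e : (k * k + k) + k * (k - 1) = k * k * 2 := by
    cases k with
    | zero => simp
    | succ j => rw [Nat.succ_sub_one]; ring
  exact Nat.add_right_cancel (h.trans e.symm)

-- ## block builders
def bM (n : ℕ) (A B : Matrix (Kn n) (Kn n) ℂ) : Matrix (Idx n) (Idx n) ℂ :=
  fromBlocks A B (mconj B) (-(mconj A))
def bH (n : ℕ) (A B : Matrix (Kn n) (Kn n) ℂ) : Matrix (Idx n) (Idx n) ℂ :=
  fromBlocks A B (-(mconj B)) (mconj A)
def dB (n : ℕ) (P : Matrix (Fin 1) (Fin 1) ℂ) (Q : Matrix (Fin (n-1)) (Fin (n-1)) ℂ) :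
    Matrix (Kn n) (Kn n) ℂ := fromBlocks P 0 0 Q
def oB (n : ℕ) (v : Matrix (Fin 1) (Fin (n-1)) ℂ) (w : Matrix (Fin (n-1)) (Fin 1) ℂ) :
    Matrix (Kn n) (Kn n) ℂ := fromBlocks 0 v w 0

lemma bM_add {n : ℕ} (A B A' B' : Matrix (Kn n) (Kn n) ℂ) :
    bM n (A + A') (B + B') = bM n A B + bM n A' B' := by
  simp only [bM, mconj_add, neg_add, fromBlocks_add]

lemma bM_smul {n : ℕ} (r : ℝ) (A B : Matrix (Kn n) (Kn n) ℂ) :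
    bM n (r • A) (r • B) = r • bM n A B := by
  simp only [bM, mconj_smul, smul_neg, fromBlocks_smul]

lemma bH_add {n : ℕ} (A B A' B' : Matrix (Kn n) (Kn n) ℂ) :
    bH n (A + A') (B + B') = bH n A B + bH n A' B' := by
  simp only [bH, mconj_add, neg_add, fromBlocks_add]

lemma bH_smul {n : ℕ} (r : ℝ) (A B : Matrix (Kn n) (Kn n) ℂ) :
    bH n (r • A) (r • B) = r • bH n A B := by
  simp only [bH, mconj_smul, smul_neg, fromBlocks_smul]

lemma dB_add {n : ℕ} (P P' : Matrix (Fin 1) (Fin 1) ℂ)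
    (Q Q' : Matrix (Fin (n-1)) (Fin (n-1)) ℂ) :
    dB n (P + P') (Q + Q') = dB n P Q + dB n P' Q' := by
  simp only [dB, fromBlocks_add, add_zero]

lemma dB_smul {n : ℕ} (r : ℝ) (P : Matrix (Fin 1) (Fin 1) ℂ)
    (Q : Matrix (Fin (n-1)) (Fin (n-1)) ℂ) :
    dB n (r • P) (r • Q) = r • dB n P Q := by
  simp only [dB, fromBlocks_smul, smul_zero]

lemma oB_add {n : ℕ} (v v' : Matrix (Fin 1) (Fin (n-1)) ℂ)
    (w w' : Matrix (Fin (n-1)) (Fin 1) ℂ) :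
    oB n (v + v') (w + w') = oB n v w + oB n v' w' := by
  simp only [oB, fromBlocks_add, add_zero]

lemma oB_smul {n : ℕ} (r : ℝ) (v : Matrix (Fin 1) (Fin (n-1)) ℂ)
    (w : Matrix (Fin (n-1)) (Fin 1) ℂ) :
    oB n (r • v) (r • w) = r • oB n v w := by
  simp only [oB, fromBlocks_smul, smul_zero]

lemma mconj_dB {n : ℕ} (P : Matrix (Fin 1) (Fin 1) ℂ) (Q : Matrix (Fin (n-1)) (Fin (n-1)) ℂ) :
    mconj (dB n P Q) = dB n (mconj P) (mconj Q) := by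
  simp only [dB, mconj_fromBlocks, mconj_zero]

lemma mconj_oB {n : ℕ} (v : Matrix (Fin 1) (Fin (n-1)) ℂ) (w : Matrix (Fin (n-1)) (Fin 1) ℂ) :
    mconj (oB n v w) = oB n (mconj v) (mconj w) := by
  simp only [oB, mconj_fromBlocks, mconj_zero]

lemma neg_dB {n : ℕ} (P : Matrix (Fin 1) (Fin 1) ℂ) (Q : Matrix (Fin (n-1)) (Fin (n-1)) ℂ) :
    -(dB n P Q) = dB n (-P) (-Q) := by
  simp only [dB, fromBlocks_neg, neg_zero]

lemma neg_oB {n : ℕ} (v : Matrix (Fin 1) (Fin (n-1)) ℂ) (w : Matrix (Fin (n-1)) (Fin 1) ℂ) :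
    -(oB n v w) = oB n (-v) (-w) := by
  simp only [oB, fromBlocks_neg, neg_zero]

lemma dB_comm_Emat {n : ℕ} (hn : 2 ≤ n) (P : Matrix (Fin 1) (Fin 1) ℂ)
    (Q : Matrix (Fin (n-1)) (Fin (n-1)) ℂ) :
    dB n P Q * Emat n = Emat n * dB n P Q := by
  rw [commE_iff hn]
  rw [dB, toBlocks_fromBlocks₁₁, toBlocks_fromBlocks₂₂]

lemma dB_conjTranspose {n : ℕ} (P : Matrix (Fin 1) (Fin 1) ℂ)
    (Q : Matrix (Fin (n-1)) (Fin (n-1)) ℂ) : (dB n P Q)ᴴ = dB n Pᴴ Qᴴ := by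
  simp only [dB, fromBlocks_conjTranspose, conjTranspose_zero]

lemma dB_transpose {n : ℕ} (P : Matrix (Fin 1) (Fin 1) ℂ)
    (Q : Matrix (Fin (n-1)) (Fin (n-1)) ℂ) : (dB n P Q)ᵀ = dB n Pᵀ Qᵀ := by
  simp only [dB, fromBlocks_transpose, transpose_zero]

lemma trace_dB {n : ℕ} (P : Matrix (Fin 1) (Fin 1) ℂ) (Q : Matrix (Fin (n-1)) (Fin (n-1)) ℂ) :
    (dB n P Q).trace = P.trace + Q.trace := trace_fromBlocks' _ _ _ _

-- ## parametrization of mPar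
def phiMPar (n : ℕ) : (USk (n-1) × SkewS (n-1)) →ₗ[ℝ] Matrix (Idx n) (Idx n) ℂ where
  toFun p := bM n (dB n ((-(p.1 : Matrix (Fin (n-1)) (Fin (n-1)) ℂ).trace) • 1) p.1) (dB n 0 p.2)
  map_add' p q := by
    have h1 : ((p + q).1 : Matrix (Fin (n-1)) (Fin (n-1)) ℂ) = ↑p.1 + ↑q.1 := rfl
    have h2 : ((p + q).2 : Matrix (Fin (n-1)) (Fin (n-1)) ℂ) = ↑p.2 + ↑q.2 := rfl
    have h3 : dB n 0 ((p.2 : Matrix (Fin (n-1)) (Fin (n-1)) ℂ) + ↑q.2) =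
        dB n 0 ↑p.2 + dB n 0 ↑q.2 := by rw [← dB_add, add_zero]
    rw [h1, h2, trace_add, neg_add, add_smul, dB_add, h3, bM_add]
  map_smul' r p := by
    have h1 : ((r • p).1 : Matrix (Fin (n-1)) (Fin (n-1)) ℂ) = r • ↑p.1 := rfl
    have h2 : ((r • p).2 : Matrix (Fin (n-1)) (Fin (n-1)) ℂ) = r • ↑p.2 := rfl
    have h3 : dB n 0 (r • (p.2 : Matrix (Fin (n-1)) (Fin (n-1)) ℂ)) = r • dB n 0 ↑p.2 := by
      have := dB_smul (n := n) r 0 ↑p.2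
      rwa [smul_zero] at this
    have h4 : (-(r • (p.1 : Matrix (Fin (n-1)) (Fin (n-1)) ℂ)).trace) • (1 : Matrix (Fin 1) (Fin 1) ℂ) =
        r • ((-(p.1 : Matrix (Fin (n-1)) (Fin (n-1)) ℂ).trace) • 1) := by
      rw [trace_smul, ← smul_neg, smul_assoc]
    rw [h1, h2, h3, h4, dB_smul, bM_smul]
    rfl

lemma mPar_eq (n : ℕ) (hn : 2 ≤ n) : mPar n = ↑(LinearMap.range (phiMPar n)) := by
  ext X
  simp only [mPar, Set.mem_setOf_eq, SetLike.mem_coe, LinearMap.mem_range]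
  constructor
  · rintro ⟨hM, hcomm⟩
    rw [inM_iff] at hM
    obtain ⟨A, B, hA, htr, hB, rfl⟩ := hM
    rw [comm_emat_iff] at hcomm
    obtain ⟨hcA, hcB, -, -⟩ := hcomm
    rw [commE_iff hn] at hcA hcB
    set A1 := A.toBlocks₁₁ with hA1
    set A2 := A.toBlocks₂₂ with hA2
    set B1 := B.toBlocks₁₁ with hB1
    set B2 := B.toBlocks₂₂ with hB2
    have gA : (fromBlocks A1 0 0 A2)ᴴ = -(fromBlocks A1 0 0 A2) := by rw [← hcA]; exact hA
    rw [fromBlocks_conjTranspose, fromBlocks_neg] at gA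
    obtain ⟨gA1, -, -, gA2⟩ := fromBlocks_inj.mp gA
    have gB : (fromBlocks B1 0 0 B2)ᵀ = -(fromBlocks B1 0 0 B2) := by rw [← hcB]; exact hB
    rw [fromBlocks_transpose, fromBlocks_neg] at gB
    obtain ⟨gB1, -, -, gB2⟩ := fromBlocks_inj.mp gB
    have hB1zero : B1 = 0 := by
      ext i j
      fin_cases i; fin_cases j
      have := congrFun (congrFun gB1 0) 0
      simp only [transpose_apply, Matrix.neg_apply] at this
      have h0 : B1 0 0 = 0 := by
        rwa [eq_neg_iff_add_eq_zero, add_self_eq_zero] at this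
      simpa using h0
    have htrA : A1.trace + A2.trace = 0 := by
      rw [hcA, trace_fromBlocks'] at htr; exact htr
    have hA1eq : A1 = (-(A2.trace)) • 1 := by
      rw [matrix1_eq_smul_one A1]
      congr 1
      rw [← trace_fin1 A1]
      linear_combination htrA
    refine ⟨(⟨A2, gA2⟩, ⟨B2, gB2⟩), ?_⟩
    have eA : A = dB n ((-(A2.trace)) • 1) A2 := by rw [dB, ← hA1eq]; exact hcA
    have eB : B = dB n 0 B2 := by rw [dB, ← hB1zero]; exact hcB
    show bM n (dB n ((-(A2.trace)) • 1) A2) (dB n 0 B2) = fromBlocks A B (mconj B) (-(mconj A))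
    rw [bM, ← eA, ← eB]
  · rintro ⟨p, rfl⟩
    obtain ⟨⟨A2, hA2⟩, ⟨B2, hB2⟩⟩ := p
    have hA2' : A2ᴴ = -A2 := hA2
    have hB2' : B2ᵀ = -B2 := hB2
    have hstar : star A2.trace = -A2.trace := by
      rw [← trace_conjTranspose, hA2', trace_neg]
    constructor
    · rw [inM_iff]
      refine ⟨_, _, ?_, ?_, ?_, rfl⟩
      · rw [dB_conjTranspose, conjTranspose_smul, conjTranspose_one, hA2', neg_dB]
        congr 1
        rw [star_neg, hstar, neg_neg, neg_smul, neg_neg]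
      · rw [trace_dB, trace_smul, Matrix.trace_one]
        simp
      · rw [dB_transpose, transpose_zero, neg_dB, neg_zero, hB2']
    · show bM n _ _ * emat n = emat n * bM n _ _
      rw [bM, comm_emat_iff]
      refine ⟨dB_comm_Emat hn _ _, dB_comm_Emat hn _ _, ?_, ?_⟩
      · rw [mconj_dB]; exact dB_comm_Emat hn _ _
      · rw [mconj_dB, neg_dB]; exact dB_comm_Emat hn _ _

lemma fromBlocks_eq_zero_iff {a b c d : Type*} (A : Matrix a c ℂ) (B : Matrix a d ℂ)
    (C : Matrix b c ℂ) (D : Matrix b d ℂ) :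
    fromBlocks A B C D = (0 : Matrix (a ⊕ b) (c ⊕ d) ℂ) ↔ A = 0 ∧ B = 0 ∧ C = 0 ∧ D = 0 := by
  rw [← fromBlocks_zero, fromBlocks_inj]

lemma phiMPar_inj (n : ℕ) : Function.Injective (phiMPar n) := by
  rw [← LinearMap.ker_eq_bot, LinearMap.ker_eq_bot']
  rintro ⟨⟨A2, hA2⟩, ⟨B2, hB2⟩⟩ hp
  have h : bM n (dB n ((-(A2.trace)) • 1) A2) (dB n 0 B2) = 0 := hp
  rw [bM, fromBlocks_eq_zero_iff] at h
  obtain ⟨h1, h2, -, -⟩ := h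
  rw [dB, fromBlocks_eq_zero_iff] at h1 h2
  simp [Prod.ext_iff, Subtype.ext_iff, h1.2.2.2, h2.2.2.2]

theorem dim_mPar (n : ℕ) (hn : 2 ≤ n) :
    finrank ℝ ↥(Submodule.span ℝ (mPar n)) = (n - 1) * (2 * n - 3) := by
  rw [mPar_eq n hn, Submodule.span_eq,
    LinearMap.finrank_range_of_inj (phiMPar_inj n),
    Module.finrank_prod, finrank_USk, finrank_SkewS]
  obtain ⟨k, rfl⟩ : ∃ k, n = k + 2 := ⟨n - 2, by omega⟩
  have e1 : k + 2 - 1 = k + 1 := rfl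
  have e2 : k + 1 - 1 = k := rfl
  have e3 : 2 * (k + 2) - 3 = 2 * k + 1 := by omega
  rw [e1, e2, e3]
  ring

-- ## parametrization of hPar
def phiHPar (n : ℕ) : (ℝ × ℂ × USk (n-1) × SymS (n-1)) →ₗ[ℝ] Matrix (Idx n) (Idx n) ℂ where
  toFun x := bH n (dB n (x.1 • (Complex.I • 1)) ↑x.2.2.1) (dB n (x.2.1 • 1) ↑x.2.2.2)
  map_add' x y := by
    have h1 : ((x + y).2.2.1 : Matrix (Fin (n-1)) (Fin (n-1)) ℂ) = ↑x.2.2.1 + ↑y.2.2.1 := rfl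
    have h2 : ((x + y).2.2.2 : Matrix (Fin (n-1)) (Fin (n-1)) ℂ) = ↑x.2.2.2 + ↑y.2.2.2 := rfl
    have h3 : (x + y).1 = x.1 + y.1 := rfl
    have h4 : (x + y).2.1 = x.2.1 + y.2.1 := rfl
    rw [h1, h2, h3, h4, add_smul, add_smul, dB_add, dB_add, bH_add]
  map_smul' r x := by
    have h1 : ((r • x).2.2.1 : Matrix (Fin (n-1)) (Fin (n-1)) ℂ) = r • ↑x.2.2.1 := rfl
    have h2 : ((r • x).2.2.2 : Matrix (Fin (n-1)) (Fin (n-1)) ℂ) = r • ↑x.2.2.2 := rfl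
    have h3 : (r • x).1 = r * x.1 := rfl
    have h4 : (r • x).2.1 = r • x.2.1 := rfl
    rw [h1, h2, h3, h4, mul_smul, smul_assoc, dB_smul, dB_smul, bH_smul]
    rfl

lemma hPar_eq (n : ℕ) (hn : 2 ≤ n) : hPar n = ↑(LinearMap.range (phiHPar n)) := by
  ext X
  simp only [hPar, Set.mem_setOf_eq, SetLike.mem_coe, LinearMap.mem_range]
  constructor
  · rintro ⟨hM, hcomm⟩
    rw [inH_iff] at hM
    obtain ⟨A, B, hA, hB, rfl⟩ := hM
    rw [comm_emat_iff] at hcomm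
    obtain ⟨hcA, hcB, -, -⟩ := hcomm
    rw [commE_iff hn] at hcA hcB
    set A1 := A.toBlocks₁₁ with hA1
    set A2 := A.toBlocks₂₂ with hA2
    set B1 := B.toBlocks₁₁ with hB1
    set B2 := B.toBlocks₂₂ with hB2
    have gA : (fromBlocks A1 0 0 A2)ᴴ = -(fromBlocks A1 0 0 A2) := by rw [← hcA]; exact hA
    rw [fromBlocks_conjTranspose, fromBlocks_neg] at gA
    obtain ⟨gA1, -, -, gA2⟩ := fromBlocks_inj.mp gA
    have gB : (fromBlocks B1 0 0 B2)ᵀ = fromBlocks B1 0 0 B2 := by rw [← hcB]; exact hB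
    rw [fromBlocks_transpose] at gB
    obtain ⟨-, -, -, gB2⟩ := fromBlocks_inj.mp gB
    have hre : (A1 0 0).re = 0 := by
      have h5 := congrFun (congrFun gA1 0) 0
      simp only [conjTranspose_apply, Matrix.neg_apply, Complex.star_def] at h5
      have h6 := congrArg Complex.re h5
      simp only [Complex.conj_re, Complex.neg_re] at h6
      linarith
    have hA1eq : A1 = ((A1 0 0).im) • (Complex.I • (1 : Matrix (Fin 1) (Fin 1) ℂ)) := by
      ext i j
      fin_cases i; fin_cases j
      simp only [Matrix.smul_apply, Matrix.one_apply_eq, smul_eq_mul, mul_one,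
        Complex.real_smul]
      apply Complex.ext <;> simp [hre]
    refine ⟨((A1 0 0).im, B1 0 0, ⟨A2, gA2⟩, ⟨B2, gB2⟩), ?_⟩
    have eA : A = dB n (((A1 0 0).im) • (Complex.I • 1)) A2 := by rw [dB, ← hA1eq]; exact hcA
    have eB : B = dB n ((B1 0 0) • 1) B2 := by rw [dB, ← matrix1_eq_smul_one B1]; exact hcB
    show bH n (dB n (((A1 0 0).im) • (Complex.I • 1)) A2) (dB n ((B1 0 0) • 1) B2)
        = fromBlocks A B (-(mconj B)) (mconj A)
    rw [bH, ← eA, ← eB]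
  · rintro ⟨x, rfl⟩
    obtain ⟨t, b, ⟨A2, hA2⟩, ⟨B2, hB2⟩⟩ := x
    have hA2' : A2ᴴ = -A2 := hA2
    have hB2' : B2ᵀ = B2 := hB2
    constructor
    · rw [inH_iff]
      refine ⟨_, _, ?_, ?_, rfl⟩
      · rw [dB_conjTranspose, hA2', neg_dB]
        congr 1
        rw [conjTranspose_smul, conjTranspose_smul, conjTranspose_one, star_trivial,
          Complex.star_def, Complex.conj_I, neg_smul, smul_neg]
      · rw [dB_transpose, transpose_smul, transpose_one, hB2']
    · show bH n _ _ * emat n = emat n * bH n _ _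
      rw [bH, comm_emat_iff]
      refine ⟨dB_comm_Emat hn _ _, dB_comm_Emat hn _ _, ?_, ?_⟩
      · rw [mconj_dB, neg_dB]; exact dB_comm_Emat hn _ _
      · rw [mconj_dB]; exact dB_comm_Emat hn _ _

lemma phiHPar_inj (n : ℕ) : Function.Injective (phiHPar n) := by
  rw [← LinearMap.ker_eq_bot, LinearMap.ker_eq_bot']
  rintro ⟨t, b, ⟨A2, hA2⟩, ⟨B2, hB2⟩⟩ hp
  have h : bH n (dB n (t • (Complex.I • 1)) A2) (dB n (b • 1) B2) = 0 := hp
  rw [bH, fromBlocks_eq_zero_iff] at h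
  obtain ⟨h1, h2, -, -⟩ := h
  rw [dB, fromBlocks_eq_zero_iff] at h1 h2
  have ht : t = 0 := by
    have := congrFun (congrFun h1.1 0) 0
    simp only [Matrix.smul_apply, Matrix.one_apply_eq, smul_eq_mul, mul_one,
      Complex.real_smul, Matrix.zero_apply] at this
    have := congrArg Complex.im this
    simpa using this
  have hb : b = 0 := by
    have := congrFun (congrFun h2.1 0) 0
    simpa using this
  simp [Prod.ext_iff, Subtype.ext_iff, ht, hb, h1.2.2.2, h2.2.2.2]

theorem dim_hPar (n : ℕ) (hn : 2 ≤ n) :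
    finrank ℝ ↥(Submodule.span ℝ (hPar n)) = (n - 1) * (2 * n - 1) + 3 := by
  rw [hPar_eq n hn, Submodule.span_eq,
    LinearMap.finrank_range_of_inj (phiHPar_inj n),
    Module.finrank_prod, Module.finrank_prod, Module.finrank_prod,
    Module.finrank_self, Complex.finrank_real_complex, finrank_USk, finrank_SymS]
  obtain ⟨k, rfl⟩ : ∃ k, n = k + 2 := ⟨n - 2, by omega⟩
  have e1 : k + 2 - 1 = k + 1 := rfl
  have e3 : 2 * (k + 2) - 1 = 2 * k + 3 := by omega
  rw [e1, e3]
  ring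

-- ## helpers for the perp parts
lemma oB_conjTranspose {n : ℕ} (v : Matrix (Fin 1) (Fin (n-1)) ℂ)
    (w : Matrix (Fin (n-1)) (Fin 1) ℂ) : (oB n v w)ᴴ = oB n wᴴ vᴴ := by
  simp only [oB, fromBlocks_conjTranspose, conjTranspose_zero]

lemma oB_transpose {n : ℕ} (v : Matrix (Fin 1) (Fin (n-1)) ℂ)
    (w : Matrix (Fin (n-1)) (Fin 1) ℂ) : (oB n v w)ᵀ = oB n wᵀ vᵀ := by
  simp only [oB, fromBlocks_transpose, transpose_zero]

lemma trace_oB {n : ℕ} (v : Matrix (Fin 1) (Fin (n-1)) ℂ) (w : Matrix (Fin (n-1)) (Fin 1) ℂ) :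
    (oB n v w).trace = 0 := by
  rw [oB, trace_fromBlocks']; simp

lemma dB_add_oB {n : ℕ} (P : Matrix (Fin 1) (Fin 1) ℂ) (Q : Matrix (Fin (n-1)) (Fin (n-1)) ℂ)
    (v : Matrix (Fin 1) (Fin (n-1)) ℂ) (w : Matrix (Fin (n-1)) (Fin 1) ℂ) :
    dB n P Q + oB n v w = fromBlocks P v w Q := by
  rw [dB, oB, fromBlocks_add]
  simp

lemma trace_oB_mul_dB {n : ℕ} (v : Matrix (Fin 1) (Fin (n-1)) ℂ)
    (w : Matrix (Fin (n-1)) (Fin 1) ℂ) (P : Matrix (Fin 1) (Fin 1) ℂ)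
    (Q : Matrix (Fin (n-1)) (Fin (n-1)) ℂ) : (oB n v w * dB n P Q).trace = 0 := by
  rw [oB, dB]; exact trace_offdiag_mul_diag _ _ _ _

lemma trace_dB_mul_oB {n : ℕ} (P : Matrix (Fin 1) (Fin 1) ℂ)
    (Q : Matrix (Fin (n-1)) (Fin (n-1)) ℂ) (v : Matrix (Fin 1) (Fin (n-1)) ℂ)
    (w : Matrix (Fin (n-1)) (Fin 1) ℂ) : (dB n P Q * oB n v w).trace = 0 := by
  rw [trace_mul_comm, oB, dB]; exact trace_offdiag_mul_diag _ _ _ _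

lemma trace_bM_mul_bM {n : ℕ} (A B A' B' : Matrix (Kn n) (Kn n) ℂ) :
    (bM n A B * bM n A' B').trace =
      (A * A').trace + (B * mconj B').trace + (mconj B * B').trace
        + (mconj A * mconj A').trace := by
  rw [bM, bM, fromBlocks_multiply, trace_fromBlocks', trace_add, trace_add, neg_mul_neg]
  ring

lemma trace_bH_mul_bH {n : ℕ} (A B A' B' : Matrix (Kn n) (Kn n) ℂ) :
    (bH n A B * bH n A' B').trace =
      (A * A').trace - (B * mconj B').trace - (mconj B * B').trace
        + (mconj A * mconj A').trace := by
  rw [bH, bH, fromBlocks_multiply, trace_fromBlocks', trace_add, trace_add,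
    mul_neg, neg_mul, trace_neg, trace_neg]
  ring

lemma star_ofReal_complex (r : ℝ) : star ((r : ℝ) : ℂ) = ((r : ℝ) : ℂ) := by
  rw [Complex.star_def, Complex.conj_ofReal]

-- ## parametrization of mPerp
def phiMPerp (n : ℕ) :
    (Matrix (Fin 1) (Fin (n-1)) ℂ × Matrix (Fin 1) (Fin (n-1)) ℂ) →ₗ[ℝ]
      Matrix (Idx n) (Idx n) ℂ where
  toFun p := bM n (oB n p.1 (-(p.1ᴴ))) (oB n p.2 (-(p.2ᵀ)))
  map_add' p q := by
    have h1 : (p + q).1 = p.1 + q.1 := rfl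
    have h2 : (p + q).2 = p.2 + q.2 := rfl
    rw [h1, h2, conjTranspose_add, transpose_add, neg_add, neg_add, oB_add, oB_add, bM_add]
  map_smul' r p := by
    have h1 : (r • p).1 = r • p.1 := rfl
    have h2 : (r • p).2 = r • p.2 := rfl
    rw [h1, h2, conjTranspose_smul, star_trivial, transpose_smul, ← smul_neg, ← smul_neg,
      oB_smul, oB_smul, bM_smul]
    rfl

lemma mPerp_eq (n : ℕ) (hn : 2 ≤ n) : mPerp n = ↑(LinearMap.range (phiMPerp n)) := by
  ext X
  simp only [mPerp, Set.mem_setOf_eq, SetLike.mem_coe, LinearMap.mem_range]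
  constructor
  · rintro ⟨hM, horth⟩
    rw [inM_iff] at hM
    obtain ⟨A, B, hA, htr, hB, rfl⟩ := hM
    set A1 := A.toBlocks₁₁ with hA1d
    set A12 := A.toBlocks₁₂ with hA12d
    set A21 := A.toBlocks₂₁ with hA21d
    set A2 := A.toBlocks₂₂ with hA2d
    set B1 := B.toBlocks₁₁ with hB1d
    set B12 := B.toBlocks₁₂ with hB12d
    set B21 := B.toBlocks₂₁ with hB21d
    set B2 := B.toBlocks₂₂ with hB2d
    have hXA : A = fromBlocks A1 A12 A21 A2 := (fromBlocks_toBlocks A).symm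
    have hXB : B = fromBlocks B1 B12 B21 B2 := (fromBlocks_toBlocks B).symm
    have gA : (fromBlocks A1 A12 A21 A2)ᴴ = -(fromBlocks A1 A12 A21 A2) := by
      rw [← hXA]; exact hA
    rw [fromBlocks_conjTranspose, fromBlocks_neg] at gA
    obtain ⟨gA1, gA21c, gA12c, gA2⟩ := fromBlocks_inj.mp gA
    have gB : (fromBlocks B1 B12 B21 B2)ᵀ = -(fromBlocks B1 B12 B21 B2) := by
      rw [← hXB]; exact hB
    rw [fromBlocks_transpose, fromBlocks_neg] at gB
    obtain ⟨gB1, gB21t, gB12t, gB2⟩ := fromBlocks_inj.mp gB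
    -- the diagonal parts
    have hB1zero : B1 = 0 := by
      ext i j
      fin_cases i; fin_cases j
      have := congrFun (congrFun gB1 0) 0
      simp only [transpose_apply, Matrix.neg_apply] at this
      have h0 : B1 0 0 = 0 := by
        rwa [eq_neg_iff_add_eq_zero, add_self_eq_zero] at this
      simpa using h0
    have htrA : A1.trace + A2.trace = 0 := by
      rw [hXA, trace_fromBlocks'] at htr; exact htr
    have hA1eq : A1 = (-(A2.trace)) • 1 := by
      rw [matrix1_eq_smul_one A1]
      congr 1
      rw [← trace_fin1 A1]
      linear_combination htrA
    -- apply orthogonality to the projection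
    have hY : bM n (dB n ((-(A2.trace)) • 1) A2) (dB n 0 B2) ∈ mPar n := by
      rw [mPar_eq n hn]
      exact ⟨(⟨A2, gA2⟩, ⟨B2, gB2⟩), rfl⟩
    have h0 := horth _ hY
    -- compute the trace
    set Ad := dB n A1 A2 with hAdd
    set Bd := dB n B1 B2 with hBdd
    have hAsplit : A = Ad + oB n A12 A21 := by rw [hAdd, dB_add_oB]; exact hXA
    have hBsplit : B = Bd + oB n B12 B21 := by rw [hBdd, dB_add_oB]; exact hXB
    have hAdH : Adᴴ = -Ad := by rw [hAdd, dB_conjTranspose, gA1, gA2, neg_dB]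
    have hBdT : Bdᵀ = -Bd := by rw [hBdd, dB_transpose, gB1, gB2, neg_dB]
    have hYA : dB n ((-(A2.trace)) • 1) A2 = Ad := by rw [hAdd, ← hA1eq]
    have hYB : dB n 0 B2 = Bd := by rw [hBdd, ← hB1zero]
    rw [hYA, hYB] at h0
    set sA : ℝ := ∑ i, ∑ j, Complex.normSq (Ad i j) with hsA
    set sB : ℝ := ∑ i, ∑ j, Complex.normSq (Bd i j) with hsB
    have t1 : (A * Ad).trace = -(sA : ℂ) := by
      rw [hAsplit, add_mul, trace_add, hAdd, trace_oB_mul_dB, add_zero, ← hAdd,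
        trace_mul_self_skewAdj Ad hAdH]
    have t4 : (mconj A * mconj Ad).trace = -(sA : ℂ) := by
      rw [← mconj_mul, trace_mconj, t1, star_neg, star_ofReal_complex]
    have t2 : (B * mconj Bd).trace = -(sB : ℂ) := by
      rw [hBsplit, add_mul, trace_add]
      have : (oB n B12 B21 * mconj Bd).trace = 0 := by
        rw [hBdd, mconj_dB, trace_oB_mul_dB]
      rw [this, add_zero, trace_mul_mconj_skew Bd hBdT]
    have t3 : (mconj B * Bd).trace = -(sB : ℂ) := by
      rw [hBsplit, mconj_add, add_mul, trace_add]
      have : (mconj (oB n B12 B21) * Bd).trace = 0 := by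
        rw [mconj_oB, hBdd, trace_oB_mul_dB]
      rw [this, add_zero, trace_mul_comm, trace_mul_mconj_skew Bd hBdT]
    have h0' : (bM n A B * bM n Ad Bd).trace = 0 := h0
    rw [trace_bM_mul_bM, t1, t2, t3, t4] at h0'
    have hsum : ((2 * sA + 2 * sB : ℝ) : ℂ) = 0 := by
      push_cast
      linear_combination -h0'
    rw [Complex.ofReal_eq_zero] at hsum
    have hsAnn : 0 ≤ sA := Finset.sum_nonneg fun i _ => Finset.sum_nonneg fun j _ =>
      Complex.normSq_nonneg _
    have hsBnn : 0 ≤ sB := Finset.sum_nonneg fun i _ => Finset.sum_nonneg fun j _ =>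
      Complex.normSq_nonneg _
    have hAd0 : Ad = 0 := eq_zero_of_sum_normSq _ (by linarith)
    have hBd0 : Bd = 0 := eq_zero_of_sum_normSq _ (by linarith)
    have eA : A = oB n A12 A21 := by rw [hAsplit, hAd0, zero_add]
    have eB : B = oB n B12 B21 := by rw [hBsplit, hBd0, zero_add]
    have hA21eq : A21 = -(A12ᴴ) := by rw [gA12c, neg_neg]
    have hB21eq : B21 = -(B12ᵀ) := by rw [gB12t, neg_neg]
    refine ⟨(A12, B12), ?_⟩
    show bM n (oB n A12 (-(A12ᴴ))) (oB n B12 (-(B12ᵀ)))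
        = fromBlocks A B (mconj B) (-(mconj A))
    rw [bM, ← hA21eq, ← hB21eq, ← eA, ← eB]
  · rintro ⟨p, rfl⟩
    constructor
    · rw [inM_iff]
      refine ⟨_, _, ?_, ?_, ?_, rfl⟩
      · rw [oB_conjTranspose, conjTranspose_neg, conjTranspose_conjTranspose, neg_oB, neg_neg]
      · exact trace_oB _ _
      · rw [oB_transpose, transpose_neg, transpose_transpose, neg_oB, neg_neg]
    · intro Y hY
      rw [mPar_eq n hn] at hY
      rw [SetLike.mem_coe, LinearMap.mem_range] at hY
      obtain ⟨q, rfl⟩ := hY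
      show (bM n (oB n p.1 (-(p.1ᴴ))) (oB n p.2 (-(p.2ᵀ)))
        * bM n (dB n ((-(q.1 : Matrix (Fin (n-1)) (Fin (n-1)) ℂ).trace) • 1) ↑q.1)
          (dB n 0 ↑q.2)).trace = 0
      rw [trace_bM_mul_bM, mconj_dB, mconj_dB, mconj_oB, mconj_oB]
      simp only [trace_oB_mul_dB]
      ring

lemma phiMPerp_inj (n : ℕ) : Function.Injective (phiMPerp n) := by
  rw [← LinearMap.ker_eq_bot, LinearMap.ker_eq_bot']
  rintro ⟨v, w⟩ hp
  have h : bM n (oB n v (-(vᴴ))) (oB n w (-(wᵀ))) = 0 := hp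
  rw [bM, fromBlocks_eq_zero_iff] at h
  obtain ⟨h1, h2, -, -⟩ := h
  rw [oB, fromBlocks_eq_zero_iff] at h1 h2
  simp [Prod.ext_iff, h1.2.1, h2.2.1]

theorem dim_mPerp (n : ℕ) (hn : 2 ≤ n) :
    finrank ℝ ↥(Submodule.span ℝ (mPerp n)) = 4 * (n - 1) := by
  rw [mPerp_eq n hn, Submodule.span_eq,
    LinearMap.finrank_range_of_inj (phiMPerp_inj n),
    Module.finrank_prod, finrank_matrixC]
  omega

-- ## parametrization of hPerp
def phiHPerp (n : ℕ) :
    (Matrix (Fin 1) (Fin (n-1)) ℂ × Matrix (Fin 1) (Fin (n-1)) ℂ) →ₗ[ℝ]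
      Matrix (Idx n) (Idx n) ℂ where
  toFun p := bH n (oB n p.1 (-(p.1ᴴ))) (oB n p.2 (p.2ᵀ))
  map_add' p q := by
    have h1 : (p + q).1 = p.1 + q.1 := rfl
    have h2 : (p + q).2 = p.2 + q.2 := rfl
    rw [h1, h2, conjTranspose_add, transpose_add, neg_add, oB_add, oB_add, bH_add]
  map_smul' r p := by
    have h1 : (r • p).1 = r • p.1 := rfl
    have h2 : (r • p).2 = r • p.2 := rfl
    rw [h1, h2, conjTranspose_smul, star_trivial, transpose_smul, ← smul_neg,
      oB_smul, oB_smul, bH_smul]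
    rfl

lemma hPerp_eq (n : ℕ) (hn : 2 ≤ n) : hPerp n = ↑(LinearMap.range (phiHPerp n)) := by
  ext X
  simp only [hPerp, Set.mem_setOf_eq, SetLike.mem_coe, LinearMap.mem_range]
  constructor
  · rintro ⟨hM, horth⟩
    rw [inH_iff] at hM
    obtain ⟨A, B, hA, hB, rfl⟩ := hM
    set A1 := A.toBlocks₁₁ with hA1d
    set A12 := A.toBlocks₁₂ with hA12d
    set A21 := A.toBlocks₂₁ with hA21d
    set A2 := A.toBlocks₂₂ with hA2d
    set B1 := B.toBlocks₁₁ with hB1d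
    set B12 := B.toBlocks₁₂ with hB12d
    set B21 := B.toBlocks₂₁ with hB21d
    set B2 := B.toBlocks₂₂ with hB2d
    have hXA : A = fromBlocks A1 A12 A21 A2 := (fromBlocks_toBlocks A).symm
    have hXB : B = fromBlocks B1 B12 B21 B2 := (fromBlocks_toBlocks B).symm
    have gA : (fromBlocks A1 A12 A21 A2)ᴴ = -(fromBlocks A1 A12 A21 A2) := by
      rw [← hXA]; exact hA
    rw [fromBlocks_conjTranspose, fromBlocks_neg] at gA
    obtain ⟨gA1, gA21c, gA12c, gA2⟩ := fromBlocks_inj.mp gA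
    have gB : (fromBlocks B1 B12 B21 B2)ᵀ = fromBlocks B1 B12 B21 B2 := by
      rw [← hXB]; exact hB
    rw [fromBlocks_transpose] at gB
    obtain ⟨gB1, gB21t, gB12t, gB2⟩ := fromBlocks_inj.mp gB
    -- A1 is purely imaginary
    have hre : (A1 0 0).re = 0 := by
      have h5 := congrFun (congrFun gA1 0) 0
      simp only [conjTranspose_apply, Matrix.neg_apply, Complex.star_def] at h5
      have h6 := congrArg Complex.re h5
      simp only [Complex.conj_re, Complex.neg_re] at h6
      linarith
    have hA1eq : A1 = ((A1 0 0).im) • (Complex.I • (1 : Matrix (Fin 1) (Fin 1) ℂ)) := by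
      ext i j
      fin_cases i; fin_cases j
      simp only [Matrix.smul_apply, Matrix.one_apply_eq, smul_eq_mul, mul_one,
        Complex.real_smul]
      apply Complex.ext <;> simp [hre]
    -- apply orthogonality to the projection
    have hY : bH n (dB n (((A1 0 0).im) • (Complex.I • 1)) A2) (dB n ((B1 0 0) • 1) B2)
        ∈ hPar n := by
      rw [hPar_eq n hn]
      exact ⟨((A1 0 0).im, B1 0 0, ⟨A2, gA2⟩, ⟨B2, gB2⟩), rfl⟩
    have h0 := horth _ hY
    set Ad := dB n A1 A2 with hAdd
    set Bd := dB n B1 B2 with hBdd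
    have hAsplit : A = Ad + oB n A12 A21 := by rw [hAdd, dB_add_oB]; exact hXA
    have hBsplit : B = Bd + oB n B12 B21 := by rw [hBdd, dB_add_oB]; exact hXB
    have hAdH : Adᴴ = -Ad := by rw [hAdd, dB_conjTranspose, gA1, gA2, neg_dB]
    have hBdT : Bdᵀ = Bd := by rw [hBdd, dB_transpose, gB1, gB2]
    have hYA : dB n (((A1 0 0).im) • (Complex.I • 1)) A2 = Ad := by rw [hAdd, ← hA1eq]
    have hYB : dB n ((B1 0 0) • 1) B2 = Bd := by rw [hBdd, ← matrix1_eq_smul_one B1]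
    rw [hYA, hYB] at h0
    set sA : ℝ := ∑ i, ∑ j, Complex.normSq (Ad i j) with hsA
    set sB : ℝ := ∑ i, ∑ j, Complex.normSq (Bd i j) with hsB
    have t1 : (A * Ad).trace = -(sA : ℂ) := by
      rw [hAsplit, add_mul, trace_add, hAdd, trace_oB_mul_dB, add_zero, ← hAdd,
        trace_mul_self_skewAdj Ad hAdH]
    have t4 : (mconj A * mconj Ad).trace = -(sA : ℂ) := by
      rw [← mconj_mul, trace_mconj, t1, star_neg, star_ofReal_complex]
    have t2 : (B * mconj Bd).trace = (sB : ℂ) := by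
      rw [hBsplit, add_mul, trace_add]
      have : (oB n B12 B21 * mconj Bd).trace = 0 := by
        rw [hBdd, mconj_dB, trace_oB_mul_dB]
      rw [this, add_zero, trace_mul_mconj_symm Bd hBdT]
    have t3 : (mconj B * Bd).trace = (sB : ℂ) := by
      rw [hBsplit, mconj_add, add_mul, trace_add]
      have : (mconj (oB n B12 B21) * Bd).trace = 0 := by
        rw [mconj_oB, hBdd, trace_oB_mul_dB]
      rw [this, add_zero, trace_mul_comm, trace_mul_mconj_symm Bd hBdT]
    have h0' : (bH n A B * bH n Ad Bd).trace = 0 := h0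
    rw [trace_bH_mul_bH, t1, t2, t3, t4] at h0'
    have hsum : ((2 * sA + 2 * sB : ℝ) : ℂ) = 0 := by
      push_cast
      linear_combination -h0'
    rw [Complex.ofReal_eq_zero] at hsum
    have hsAnn : 0 ≤ sA := Finset.sum_nonneg fun i _ => Finset.sum_nonneg fun j _ =>
      Complex.normSq_nonneg _
    have hsBnn : 0 ≤ sB := Finset.sum_nonneg fun i _ => Finset.sum_nonneg fun j _ =>
      Complex.normSq_nonneg _
    have hAd0 : Ad = 0 := eq_zero_of_sum_normSq _ (by linarith)
    have hBd0 : Bd = 0 := eq_zero_of_sum_normSq _ (by linarith)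
    have eA : A = oB n A12 A21 := by rw [hAsplit, hAd0, zero_add]
    have eB : B = oB n B12 B21 := by rw [hBsplit, hBd0, zero_add]
    have hA21eq : A21 = -(A12ᴴ) := by rw [gA12c, neg_neg]
    have hB21eq : B21 = B12ᵀ := gB12t.symm
    refine ⟨(A12, B12), ?_⟩
    show bH n (oB n A12 (-(A12ᴴ))) (oB n B12 (B12ᵀ))
        = fromBlocks A B (-(mconj B)) (mconj A)
    rw [bH, ← hA21eq, ← hB21eq, ← eA, ← eB]
  · rintro ⟨p, rfl⟩
    constructor
    · rw [inH_iff]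
      refine ⟨_, _, ?_, ?_, rfl⟩
      · rw [oB_conjTranspose, conjTranspose_neg, conjTranspose_conjTranspose, neg_oB, neg_neg]
      · rw [oB_transpose, transpose_transpose]
    · intro Y hY
      rw [hPar_eq n hn] at hY
      rw [SetLike.mem_coe, LinearMap.mem_range] at hY
      obtain ⟨q, rfl⟩ := hY
      show (bH n (oB n p.1 (-(p.1ᴴ))) (oB n p.2 (p.2ᵀ))
        * bH n (dB n (q.1 • (Complex.I • 1)) ↑q.2.2.1)
          (dB n (q.2.1 • 1) ↑q.2.2.2)).trace = 0
      rw [trace_bH_mul_bH, mconj_dB, mconj_dB, mconj_oB, mconj_oB]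
      simp only [trace_oB_mul_dB]
      ring

lemma phiHPerp_inj (n : ℕ) : Function.Injective (phiHPerp n) := by
  rw [← LinearMap.ker_eq_bot, LinearMap.ker_eq_bot']
  rintro ⟨v, w⟩ hp
  have h : bH n (oB n v (-(vᴴ))) (oB n w (wᵀ)) = 0 := hp
  rw [bH, fromBlocks_eq_zero_iff] at h
  obtain ⟨h1, h2, -, -⟩ := h
  rw [oB, fromBlocks_eq_zero_iff] at h1 h2
  simp [Prod.ext_iff, h1.2.1, h2.2.1]

theorem dim_hPerp (n : ℕ) (hn : 2 ≤ n) :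
    finrank ℝ ↥(Submodule.span ℝ (hPerp n)) = 4 * (n - 1) := by
  rw [hPerp_eq n hn, Submodule.span_eq,
    LinearMap.finrank_range_of_inj (phiHPerp_inj n),
    Module.finrank_prod, finrank_matrixC]
  omega


/-- the real dimensions of m_∥, m_⊥, h_∥, h_⊥.  (Each of these
sets is a real subspace, hence coincides with its real span.) -/
theorem stmt6 (n : ℕ) (hn : 2 ≤ n) :
    Module.finrank ℝ ↥(Submodule.span ℝ (mPar n)) = (n - 1) * (2 * n - 3) ∧
    Module.finrank ℝ ↥(Submodule.span ℝ (mPerp n)) = 4 * (n - 1) ∧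
    Module.finrank ℝ ↥(Submodule.span ℝ (hPar n)) = (n - 1) * (2 * n - 1) + 3 ∧
    Module.finrank ℝ ↥(Submodule.span ℝ (hPerp n)) = 4 * (n - 1) := by
  exact ⟨dim_mPar n hn, dim_mPerp n hn, dim_hPar n hn, dim_hPerp n hn⟩
end
end
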